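/- arXiv:2210.07338 — 2 statements merged into one kernel-verified Lean document; each statement's English description precedes it below -/
import Mathlib

section
/- Let μ_{k+1} be an H-step lookahead policy with respect to V_k, i.e., T_{μ_{k+1}} T^{H−1} V_k = T^H V_k. If TV_k − V_k ≤ κ·e componentwise with κ ≥ 0, then J^{μ_{k+1}} ≤ T^{H−1} V_k + (α^{H−1} κ/(1−α))·e componentwise. -/
open Finset

/-- Bellman optimality operator for a finite MDP. -/
noncomputable def bellman {S A : Type*} [Fintype S] [Fintype A] [Nonempty A]
    (P : A → S → S → ℝ) (g : S → A → ℝ) (α : ℝ) (J : S → ℝ) : S → ℝ :=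
  fun i => ⨅ u : A, (g i u + α * ∑ j, P u i j * J j)

/-- Bellman operator of a fixed policy `μ`. -/
noncomputable def Tpol {S A : Type*} [Fintype S]
    (P : A → S → S → ℝ) (g : S → A → ℝ) (α : ℝ) (μ : S → A) (J : S → ℝ) : S → ℝ :=
  fun i => g i (μ i) + α * ∑ j, P (μ i) i j * J j

/-!
Both `T` and `T_μ` are monotone and satisfy `F (J + c·e) = F J + α c·e`. Iterating
`T V ≤ V + κ e` gives `T^H V ≤ T^{H-1} V + α^{H-1} κ e`, i.e. `T_μ W ≤ W + α^{H-1} κ e` for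
`W = T^{H-1} V`. If `M` is the largest entry of `J^μ - W`, then `J^μ = T_μ J^μ ≤ T_μ (W + M e)
≤ W + (α^{H-1} κ + α M) e`, and reading this at a maximising state gives
`M ≤ α^{H-1} κ / (1 - α)`.
-/

open Function

section MonotoneShift

variable {S : Type*} {F : (S → ℝ) → S → ℝ} {α : ℝ}

theorem iterate_succ_le_add_const (hF : Monotone F)
    (hshift : ∀ J c, F (J + const S c) = F J + const S (α * c))
    {V : S → ℝ} {κ : ℝ} (hV : F V ≤ V + const S κ) (n : ℕ) :
    F^[n + 1] V ≤ F^[n] V + const S (α ^ n * κ) := by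
  induction n with
  | zero => simpa using hV
  | succ n ih =>
    calc F^[n + 2] V = F (F^[n + 1] V) := iterate_succ_apply' F (n + 1) V
      _ ≤ F (F^[n] V + const S (α ^ n * κ)) := hF ih
      _ = F^[n + 1] V + const S (α ^ (n + 1) * κ) := by
        rw [hshift, pow_succ', mul_assoc, iterate_succ_apply']

theorem le_add_div_one_sub_of_isFixedPt [Finite S] (hF : Monotone F)
    (hshift : ∀ J c, F (J + const S c) = F J + const S (α * c)) (hα : α < 1)
    {J W : S → ℝ} (hJ : IsFixedPt F J) {c : ℝ} (hW : F W ≤ W + const S c) :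
    J ≤ W + const S (c / (1 - α)) := by
  intro i
  have : Nonempty S := ⟨i⟩
  obtain ⟨i₀, hi₀⟩ := Finite.exists_max (fun j => J j - W j)
  set M := J i₀ - W i₀
  have hJM : ∀ j, J j ≤ W j + M := fun j => by linarith [hi₀ j]
  have hM : M ≤ c + α * M := by
    have hJ_le : J ≤ F W + const S (α * M) := by
      calc J = F J := hJ.symm
        _ ≤ F (W + const S M) := hF hJM
        _ = F W + const S (α * M) := hshift W M
    have h₁ : J i₀ ≤ F W i₀ + α * M := hJ_le i₀
    have h₂ : F W i₀ ≤ W i₀ + c := hW i₀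
    linarith
  have hMc : M ≤ c / (1 - α) := by
    rw [le_div_iff₀ (by linarith)]
    linarith
  show J i ≤ W i + c / (1 - α)
  linarith [hJM i]

end MonotoneShift

section FiniteMDP

variable {S A : Type*} [Fintype S] (P : A → S → S → ℝ) (g : S → A → ℝ) {α : ℝ}

theorem Tpol_monotone (hα : 0 ≤ α) (hP0 : ∀ u i j, 0 ≤ P u i j) (μ : S → A) :
    Monotone (Tpol P g α μ) := by
  intro J J' h i
  unfold Tpol
  gcongr with j
  · exact hP0 _ i j
  · exact h j

theorem Tpol_add_const (hP1 : ∀ u i, ∑ j, P u i j = 1) (μ : S → A) (J : S → ℝ) (c : ℝ) :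
    Tpol P g α μ (J + const S c) = Tpol P g α μ J + const S (α * c) := by
  ext i
  simp only [Tpol, Pi.add_apply, const_apply, mul_add, sum_add_distrib, ← sum_mul, hP1]
  ring

variable [Fintype A] [Nonempty A]

theorem bellman_eq_iInf_Tpol (α : ℝ) (J : S → ℝ) (i : S) :
    bellman P g α J i = ⨅ u : A, Tpol P g α (const S u) J i :=
  rfl

theorem bellman_monotone (hα : 0 ≤ α) (hP0 : ∀ u i j, 0 ≤ P u i j) :
    Monotone (bellman P g α) := fun J J' h i => by
  simp only [bellman_eq_iInf_Tpol]
  exact ciInf_mono (Set.finite_range _).bddBelow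
    fun u => Tpol_monotone P g hα hP0 (const S u) h i

theorem bellman_add_const (hP1 : ∀ u i, ∑ j, P u i j = 1) (J : S → ℝ) (c : ℝ) :
    bellman P g α (J + const S c) = bellman P g α J + const S (α * c) := by
  ext i
  simp only [bellman_eq_iInf_Tpol, Tpol_add_const P g hP1, Pi.add_apply, const_apply]
  exact (ciInf_add (Set.finite_range _).bddBelow _).symm

end FiniteMDP

theorem lookahead_policy_bound_general {S A : Type*} [Fintype S] [Fintype A] [Nonempty A]
    (P : A → S → S → ℝ) (g : S → A → ℝ) (α : ℝ)
    (hα : α ∈ Set.Ioo (0 : ℝ) 1)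
    (hP0 : ∀ u i j, 0 ≤ P u i j) (hP1 : ∀ u i, ∑ j, P u i j = 1)
    (H : ℕ) (hH : 1 ≤ H)
    (μ : S → A) (V : S → ℝ)
    (hlookahead : Tpol P g α μ ((bellman P g α)^[H - 1] V) = (bellman P g α)^[H] V)
    (κ : ℝ)
    (hV : ∀ i, bellman P g α V i - V i ≤ κ)
    (Jμ : S → ℝ) (hJμ : Tpol P g α μ Jμ = Jμ) :
    ∀ i, Jμ i ≤ (bellman P g α)^[H - 1] V i + α ^ (H - 1) * κ / (1 - α) := by
  obtain ⟨hα0, hα1⟩ := hα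
  obtain ⟨n, rfl⟩ : ∃ n, H = n + 1 := ⟨H - 1, by omega⟩
  rw [Nat.add_sub_cancel] at hlookahead ⊢
  have hstep : Tpol P g α μ ((bellman P g α)^[n] V)
      ≤ (bellman P g α)^[n] V + const S (α ^ n * κ) :=
    hlookahead ▸ iterate_succ_le_add_const (bellman_monotone P g hα0.le hP0)
      (bellman_add_const P g hP1) (fun i => by simp [hV i, ← sub_le_iff_le_add']) n
  exact le_add_div_one_sub_of_isFixedPt (Tpol_monotone P g hα0.le hP0 μ)
    (Tpol_add_const P g hP1 μ) hα1 hJμ hstep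

/-- If `μ` is an `H`-step lookahead policy w.r.t. `V` and `TV - V ≤ κ·e`, then
`J^μ ≤ T^{H-1} V + (α^{H-1} κ/(1-α))·e`. -/
theorem lookahead_policy_bound {S A : Type*} [Fintype S] [Fintype A] [Nonempty A]
    (P : A → S → S → ℝ) (g : S → A → ℝ) (α : ℝ)
    (hα : α ∈ Set.Ioo (0 : ℝ) 1)
    (hP0 : ∀ u i j, 0 ≤ P u i j) (hP1 : ∀ u i, ∑ j, P u i j = 1)
    (H : ℕ) (hH : 1 ≤ H)
    (μ : S → A) (V : S → ℝ)
    (hlookahead : Tpol P g α μ ((bellman P g α)^[H - 1] V) = (bellman P g α)^[H] V)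
    (κ : ℝ) (hκ : 0 ≤ κ)
    (hV : ∀ i, bellman P g α V i - V i ≤ κ)
    (Jμ : S → ℝ) (hJμ : Tpol P g α μ Jμ = Jμ) :
    ∀ i, Jμ i ≤ (bellman P g α)^[H - 1] V i + α ^ (H - 1) * κ / (1 - α) :=
  lookahead_policy_bound_general P g α hα hP0 hP1 H hH μ V hlookahead κ hV Jμ hJμ
end

section
/- For the H-step lookahead policy μ defined by T_μ T^{H−1} V = T^H V, the suboptimality satisfies ‖J^μ − J*‖_∞ ≤ (2 α^H / (1−α)) ‖V − J*‖_∞. -/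
open Finset

/-!
Both `T` and `T_μ` are `α`-Lipschitz in the sup norm, since each coordinate is a stochastic
average followed (for `T`) by a minimum over actions; in particular
`‖T^n V - J*‖ ≤ α^n ‖V - J*‖`. For the contraction `T_μ` with fixed point `J^μ` and any `W`,
`‖J^μ - J*‖ ≤ ‖T_μ J* - J*‖ / (1 - α) ≤ (‖T_μ W - J*‖ + α ‖W - J*‖) / (1 - α)`.
Taking `W = T^{H-1} V`, where `T_μ W = T^H V`, both terms are at most `α^H ‖V - J*‖`.
-/

theorem dist_sum_mul_le_dist_of_sum_eq_one {ι : Type*} [Fintype ι] {p : ι → ℝ}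
    (hp0 : ∀ j, 0 ≤ p j) (hp1 : ∑ j, p j = 1) (x y : ι → ℝ) :
    dist (∑ j, p j * x j) (∑ j, p j * y j) ≤ dist x y :=
  calc dist (∑ j, p j * x j) (∑ j, p j * y j) = |∑ j, p j * (x j - y j)| := by
        simp only [Real.dist_eq, mul_sub, sum_sub_distrib]
    _ ≤ ∑ j, p j * dist (x j) (y j) := by
        refine (abs_sum_le_sum_abs _ _).trans (sum_le_sum fun j _ => ?_)
        rw [abs_mul, abs_of_nonneg (hp0 j), Real.dist_eq]
    _ ≤ ∑ j, p j * dist x y :=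
        sum_le_sum fun j _ => mul_le_mul_of_nonneg_left (dist_le_pi_dist x y j) (hp0 j)
    _ = dist x y := by rw [← sum_mul, hp1, one_mul]

theorem dist_ciInf_le_of_forall_dist_le {ι : Type*} [Finite ι] [Nonempty ι] {f f' : ι → ℝ}
    {c : ℝ} (h : ∀ u, dist (f u) (f' u) ≤ c) : dist (⨅ u, f u) (⨅ u, f' u) ≤ c := by
  have ciInf_le_ciInf_add {f f' : ι → ℝ} (h : ∀ u, f u ≤ f' u + c) : ⨅ u, f u ≤ (⨅ u, f' u) + c :=
    sub_le_iff_le_add.1 <| le_ciInf fun u =>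
      sub_le_iff_le_add.2 <| (ciInf_le (Finite.bddBelow_range f) u).trans (h u)
  have hu u : f u ≤ f' u + c ∧ f' u ≤ f u + c := by
    have := h u
    rw [Real.dist_eq, abs_sub_le_iff] at this
    constructor <;> linarith
  rw [Real.dist_eq, abs_sub_le_iff, sub_le_iff_le_add', sub_le_iff_le_add']
  exact ⟨ciInf_le_ciInf_add fun u => (hu u).1, ciInf_le_ciInf_add fun u => (hu u).2⟩

theorem LipschitzWith.dist_iterate_le_of_isFixedPt {X : Type*} [PseudoMetricSpace X]
    {K : NNReal} {f : X → X} (hf : LipschitzWith K f) {y : X} (hy : Function.IsFixedPt f y)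
    (x : X) (n : ℕ) : dist (f^[n] x) y ≤ K ^ n * dist x y := by
  simpa [(hy.iterate n).eq] using (hf.iterate n).dist_le_mul x y

theorem ContractingWith.dist_le_of_isFixedPt {X : Type*} [MetricSpace X] {K : NNReal}
    {f : X → X} (hf : ContractingWith K f) {x : X} (hx : Function.IsFixedPt f x) (y w : X) :
    dist x y ≤ (dist (f w) y + K * dist w y) / (1 - K) :=
  calc dist x y = dist y x := dist_comm x y
    _ ≤ dist y (f y) / (1 - K) := hf.dist_le_of_fixedPoint y hx
    _ ≤ (dist (f w) y + K * dist w y) / (1 - K) := by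
      gcongr
      · exact sub_nonneg.2 (NNReal.coe_le_one.2 hf.1.le)
      · exact (dist_triangle_left _ _ _).trans (add_le_add_right (hf.2.dist_le_mul w y) _)

section MDP

variable {S A : Type*} [Fintype S] {P : A → S → S → ℝ} {g : S → A → ℝ} {α : ℝ}

theorem dist_qValue_le (hα0 : 0 ≤ α) (hP0 : ∀ u i j, 0 ≤ P u i j)
    (hP1 : ∀ u i, ∑ j, P u i j = 1) (i : S) (u : A) (J J' : S → ℝ) :
    dist (g i u + α * ∑ j, P u i j * J j) (g i u + α * ∑ j, P u i j * J' j) ≤ α * dist J J' := by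
  rw [dist_add_left, Real.dist_eq, ← mul_sub, abs_mul, abs_of_nonneg hα0, ← Real.dist_eq]
  exact mul_le_mul_of_nonneg_left
    (dist_sum_mul_le_dist_of_sum_eq_one (hP0 u i) (hP1 u i) J J') hα0

theorem lipschitzWith_Tpol (hα0 : 0 ≤ α) (hP0 : ∀ u i j, 0 ≤ P u i j)
    (hP1 : ∀ u i, ∑ j, P u i j = 1) (μ : S → A) :
    LipschitzWith (Real.toNNReal α) (Tpol P g α μ) :=
  LipschitzWith.of_dist_le_mul fun J J' => by
    rw [Real.coe_toNNReal _ hα0]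
    exact (dist_pi_le_iff (by positivity)).2 fun i => dist_qValue_le hα0 hP0 hP1 i (μ i) J J'

theorem lipschitzWith_bellman [Fintype A] [Nonempty A] (hα0 : 0 ≤ α)
    (hP0 : ∀ u i j, 0 ≤ P u i j) (hP1 : ∀ u i, ∑ j, P u i j = 1) :
    LipschitzWith (Real.toNNReal α) (bellman P g α) :=
  LipschitzWith.of_dist_le_mul fun J J' => by
    rw [Real.coe_toNNReal _ hα0]
    exact (dist_pi_le_iff (by positivity)).2 fun i =>
      dist_ciInf_le_of_forall_dist_le fun u => dist_qValue_le hα0 hP0 hP1 i u J J'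

end MDP

theorem lookahead_suboptimality_general {S A : Type*} [Fintype S] [Fintype A] [Nonempty A]
    (P : A → S → S → ℝ) (g : S → A → ℝ) (α : ℝ)
    (hα : α ∈ Set.Ioo (0 : ℝ) 1)
    (hP0 : ∀ u i j, 0 ≤ P u i j) (hP1 : ∀ u i, ∑ j, P u i j = 1)
    (H : ℕ)
    (V : S → ℝ) (μ : S → A)
    (hlookahead : Tpol P g α μ ((bellman P g α)^[H - 1] V) = (bellman P g α)^[H] V)
    (Jstar : S → ℝ) (hJstar : bellman P g α Jstar = Jstar)
    (Jμ : S → ℝ) (hJμ : Tpol P g α μ Jμ = Jμ) :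
    ‖Jμ - Jstar‖ ≤ 2 * α ^ H / (1 - α) * ‖V - Jstar‖ := by
  obtain ⟨hα0, hα1⟩ := hα
  have hK : (Real.toNNReal α : ℝ) = α := Real.coe_toNNReal _ hα0.le
  have hTμ : ContractingWith (Real.toNNReal α) (Tpol P g α μ) :=
    ⟨Real.toNNReal_lt_one.2 hα1, lipschitzWith_Tpol hα0.le hP0 hP1 μ⟩
  have hT := lipschitzWith_bellman (g := g) hα0.le hP0 hP1
  have hTn (n : ℕ) : dist ((bellman P g α)^[n] V) Jstar ≤ α ^ n * ‖V - Jstar‖ := by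
    simpa only [NNReal.coe_pow, hK, dist_eq_norm] using hT.dist_iterate_le_of_isFixedPt hJstar V n
  have hαH : α * α ^ (H - 1) ≤ α ^ H := by
    rw [← pow_succ']
    exact pow_le_pow_of_le_one hα0.le hα1.le (by omega)
  calc ‖Jμ - Jstar‖
      ≤ (dist ((bellman P g α)^[H] V) Jstar + α * dist ((bellman P g α)^[H - 1] V) Jstar)
          / (1 - α) := by
        simpa only [hK, hlookahead, dist_eq_norm] using
          hTμ.dist_le_of_isFixedPt hJμ Jstar ((bellman P g α)^[H - 1] V)
    _ ≤ (α ^ H * ‖V - Jstar‖ + α * (α ^ (H - 1) * ‖V - Jstar‖)) / (1 - α) := by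
        gcongr
        exacts [hTn H, hTn (H - 1)]
    _ ≤ 2 * α ^ H / (1 - α) * ‖V - Jstar‖ := by
        rw [div_mul_eq_mul_div, two_mul, add_mul, ← mul_assoc]
        gcongr

/-- Suboptimality of the `H`-step lookahead policy:
`‖J^μ - J*‖_∞ ≤ (2 α^H/(1-α)) ‖V - J*‖_∞` (sup norms on `S → ℝ`). -/
theorem lookahead_suboptimality {S A : Type*} [Fintype S] [Fintype A] [Nonempty A]
    (P : A → S → S → ℝ) (g : S → A → ℝ) (α : ℝ)
    (hα : α ∈ Set.Ioo (0 : ℝ) 1)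
    (hP0 : ∀ u i j, 0 ≤ P u i j) (hP1 : ∀ u i, ∑ j, P u i j = 1)
    (H : ℕ) (hH : 1 ≤ H)
    (V : S → ℝ) (μ : S → A)
    (hlookahead : Tpol P g α μ ((bellman P g α)^[H - 1] V) = (bellman P g α)^[H] V)
    (Jstar : S → ℝ) (hJstar : bellman P g α Jstar = Jstar)
    (Jμ : S → ℝ) (hJμ : Tpol P g α μ Jμ = Jμ) :
    ‖Jμ - Jstar‖ ≤ 2 * α ^ H / (1 - α) * ‖V - Jstar‖ :=
  lookahead_suboptimality_general P g α hα hP0 hP1 H V μ hlookahead Jstar hJstar Jμ hJμ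
end
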